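/- arXiv:1407.0912 — 4 statements merged into one kernel-verified Lean document; each statement's English description precedes it below -/
import Mathlib

section
/- (Unfolding criterion for integrals, Prop. 3.3(iii).) Let ε > 0 and fix a partition of (0,1) for the parameter ε. Then for every φ ∈ L¹(R^ε) one has ∫_{(0,1)×Y*} (1/l([x]_ε)) · T_ε(φ)(x,y₁,y₂) dx dy₁ dy₂ = (1/ε) ∫_{R^ε} φ(x,y) dx dy, and ∫_{(0,1)×Y*} T_ε(φ)(x,y₁,y₂) dx dy₁ dy₂ = (1/ε) ∫_{R^ε} l([x]_ε) φ(x,y) dx dy. -/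
open MeasureTheory Set Filter Topology

noncomputable section

/-- The thin domain `R^ε = {(x,y) : x ∈ (0,1), 0 < y < ε G(x, x/ε)}`. -/
def thinDomain (G : ℝ → ℝ → ℝ) (ε : ℝ) : Set (ℝ × ℝ) :=
  {z : ℝ × ℝ | z.1 ∈ Ioo (0 : ℝ) 1 ∧ z.2 ∈ Ioo (0 : ℝ) (ε * G z.1 (z.1 / ε))}

/-- The reference cell `Y* = (0,l₁) × (0,G₁)`. -/
def Ystar (l1 G1 : ℝ) : Set (ℝ × ℝ) := Ioo (0 : ℝ) l1 ×ˢ Ioo (0 : ℝ) G1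

/-- A partition `0 = x₀ < x₁ < ⋯ < x_{N+1} = 1` of the interval `(0,1)` (for a parameter `ε`). -/
structure ThinPartition where
  N : ℕ
  pts : ℕ → ℝ
  pts_zero : pts 0 = 0
  pts_last : pts (N + 1) = 1
  pts_lt : ∀ k ≤ N, pts k < pts (k + 1)

/-- The index `k` such that `x ∈ [x_k, x_{k+1})` (for `x ∈ [0,1)`). -/
def ThinPartition.idx (P : ThinPartition) (x : ℝ) : ℕ :=
  Nat.findGreatest (fun k => P.pts k ≤ x) P.N

/-- `[x]_ε`, the partition point just below `x`. -/
def ThinPartition.bracket (P : ThinPartition) (x : ℝ) : ℝ := P.pts (P.idx x)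

/-- `Γ_{[x]_ε} = (x_{k+1} - x_k) / l(x_k)` for `x ∈ [x_k, x_{k+1})`. -/
def ThinPartition.Gamma (P : ThinPartition) (l : ℝ → ℝ) (x : ℝ) : ℝ :=
  (P.pts (P.idx x + 1) - P.pts (P.idx x)) / l (P.pts (P.idx x))

/-- The unfolding operator `T_ε` associated to a partition, acting on a function `φ` on `R^ε`
(extended by zero to all of `ℝ²` via the indicator of `R^ε`). -/
def unfoldOp (G : ℝ → ℝ → ℝ) (l : ℝ → ℝ) (ε : ℝ) (P : ThinPartition)
    (φ : ℝ × ℝ → ℝ) : ℝ × ℝ × ℝ → ℝ := fun q =>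
  if q.2.1 < l (P.bracket q.1) then
    (thinDomain G ε).indicator φ (P.bracket q.1 + P.Gamma l q.1 * q.2.1, ε * q.2.2)
  else 0

/-- The averaging operator `U_ε`, the formal adjoint of `T_ε`. -/
def avgOp (l : ℝ → ℝ) (ε : ℝ) (P : ThinPartition) (ψ : ℝ × ℝ × ℝ → ℝ) : ℝ × ℝ → ℝ := fun z =>
  (1 / l (P.bracket z.1)) *
    ∫ y₁ in Ioo (0 : ℝ) (l (P.bracket z.1)),
      ψ (P.bracket z.1 + P.Gamma l z.1 * y₁, (z.1 - P.bracket z.1) / P.Gamma l z.1, z.2 / ε)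

/-- The limit set `W = {(x,y₁,y₂) : x ∈ (0,1), 0 < y₁ < l(x), 0 < y₂ < G(x,y₁)}`. -/
def Wset (G : ℝ → ℝ → ℝ) (l : ℝ → ℝ) : Set (ℝ × ℝ × ℝ) :=
  {q | q.1 ∈ Ioo (0 : ℝ) 1 ∧ q.2.1 ∈ Ioo (0 : ℝ) (l q.1) ∧ q.2.2 ∈ Ioo (0 : ℝ) (G q.1 q.2.1)}

/-- The set `W₀ = {(x,y₁) : x ∈ (0,1), 0 < y₁ < l(x)}`. -/
def W0set (l : ℝ → ℝ) : Set (ℝ × ℝ) :=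
  {z : ℝ × ℝ | z.1 ∈ Ioo (0 : ℝ) 1 ∧ z.2 ∈ Ioo (0 : ℝ) (l z.1)}

/-!
On a cell `[x_k, x_{k+1})` of the partition, `T_ε φ (x, y)` does not depend on `x`: it is the
zero extension of `φ` at `(x_k + Γ_k y₁, ε y₂)`, cut off at `y₁ < l(x_k)`. Integrating in `x`
over the cell gives the factor `x_{k+1} - x_k`, and the affine change of variables, with Jacobian
`Γ_k ε = (x_{k+1} - x_k) ε / l(x_k)`, maps `(0, l(x_k)) × (0, G₁)` onto the strip
`(x_k, x_{k+1}) × (0, ε G₁)`, which contains the part of `R^ε` above the cell. So each cell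
contributes `l(x_k) / ε` times the integral of `φ` over that part of `R^ε`; a weight depending
only on `[x]_ε` is constant on the cell and passes through. Summing over the cells gives both
identities, with the weights `1 / l([x]_ε)` and `1`.
-/

lemma map_volume_affine_prod {a Γ e : ℝ} (hΓ : 0 < Γ) (he : 0 < e) :
    Measure.map (fun y : ℝ × ℝ => (a + Γ * y.1, e * y.2)) volume
      = ENNReal.ofReal (Γ * e)⁻¹ • volume := by
  have hA : (fun y : ℝ × ℝ => (a + Γ * y.1, e * y.2))
      = ((a, 0) + ·) ∘ Prod.map (Γ * ·) (e * ·) := by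
    ext y <;> simp
  rw [hA, ← Measure.map_map (measurable_const_add _)
      ((measurable_const_mul Γ).prodMap (measurable_const_mul e)),
    Measure.volume_eq_prod, ← Measure.map_prod_map _ _ (measurable_const_mul Γ)
      (measurable_const_mul e),
    Real.map_volume_mul_left hΓ.ne', Real.map_volume_mul_left he.ne',
    Measure.prod_smul_left, Measure.prod_smul_right, smul_smul, Measure.map_smul,
    ← Measure.volume_eq_prod, map_add_left_eq_self, abs_of_pos (inv_pos.2 hΓ),
    abs_of_pos (inv_pos.2 he), ← ENNReal.ofReal_mul (inv_pos.2 hΓ).le, mul_inv]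

lemma measurableEmbedding_affine_prod {a Γ e : ℝ} (hΓ : Γ ≠ 0) (he : e ≠ 0) :
    MeasurableEmbedding (fun y : ℝ × ℝ => (a + Γ * y.1, e * y.2)) :=
  ((measurableEmbedding_addLeft a).comp (measurableEmbedding_mulLeft₀ hΓ)).prodMap
    (measurableEmbedding_mulLeft₀ he)

lemma integrable_comp_affine_prod {E : Type*} [NormedAddCommGroup E] {a Γ e : ℝ} (hΓ : 0 < Γ)
    (he : 0 < e) {Φ : ℝ × ℝ → E} (hΦ : Integrable Φ) :
    Integrable (fun y : ℝ × ℝ => Φ (a + Γ * y.1, e * y.2)) := by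
  refine (measurableEmbedding_affine_prod hΓ.ne' he.ne').integrable_map_iff.1 ?_
  rw [map_volume_affine_prod hΓ he]
  exact hΦ.smul_measure ENNReal.ofReal_ne_top

lemma setIntegral_Ioo_prod_Ioo_comp_affine {E : Type*} [NormedAddCommGroup E] [NormedSpace ℝ E]
    {a Γ e : ℝ} (hΓ : 0 < Γ) (he : 0 < e) (L M : ℝ) (Φ : ℝ × ℝ → E) :
    ∫ y in Ioo 0 L ×ˢ Ioo 0 M, Φ (a + Γ * y.1, e * y.2)
      = (Γ * e)⁻¹ • ∫ z in Ioo a (a + Γ * L) ×ˢ Ioo 0 (e * M), Φ z := by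
  have hpre : (fun y : ℝ × ℝ => (a + Γ * y.1, e * y.2)) ⁻¹' (Ioo a (a + Γ * L) ×ˢ Ioo 0 (e * M))
      = Ioo 0 L ×ˢ Ioo 0 M := by
    ext y
    simp [mul_pos_iff_of_pos_left hΓ, mul_pos_iff_of_pos_left he, mul_lt_mul_iff_right₀ hΓ,
      mul_lt_mul_iff_right₀ he]
  rw [← hpre, ← (measurableEmbedding_affine_prod hΓ.ne' he.ne').setIntegral_map,
    map_volume_affine_prod hΓ he, Measure.restrict_smul, integral_smul_measure,
    ENNReal.toReal_ofReal (by positivity)]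

namespace ThinPartition

variable (P : ThinPartition)

def cell (k : ℕ) : Set ℝ := Ico (P.pts k) (P.pts (k + 1))

instance (k : ℕ) : IsFiniteMeasure (volume.restrict (P.cell k)) :=
  Real.isFiniteMeasure_restrict_Ico _ _

lemma pts_strictMonoOn : StrictMonoOn P.pts (Iic (P.N + 1)) :=
  strictMonoOn_Iic_of_lt_succ fun m hm => P.pts_lt m (Nat.lt_succ_iff.1 hm)

lemma pts_mem_Icc {k : ℕ} (hk : k ≤ P.N + 1) : P.pts k ∈ Icc 0 1 := by
  rw [← P.pts_zero, ← P.pts_last]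
  exact ⟨P.pts_strictMonoOn.monotoneOn (Nat.zero_le _) hk (Nat.zero_le k),
    P.pts_strictMonoOn.monotoneOn hk (mem_Iic.2 le_rfl) hk⟩

lemma idx_le (x : ℝ) : P.idx x ≤ P.N := Nat.findGreatest_le _

lemma bracket_mem_Icc (x : ℝ) : P.bracket x ∈ Icc 0 1 :=
  P.pts_mem_Icc (Nat.le_succ_of_le (P.idx_le x))

lemma idx_eq_of_mem_cell {k : ℕ} {x : ℝ} (hk : k ≤ P.N) (hx : x ∈ P.cell k) : P.idx x = k := by
  rw [idx, Nat.findGreatest_eq_iff]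
  refine ⟨hk, fun _ => hx.1, fun n hkn hnN hn => ?_⟩
  have hmono := P.pts_strictMonoOn.monotoneOn (mem_Iic.2 (by omega)) (mem_Iic.2 (by omega)) hkn
  exact (hx.2.trans_le hmono).not_ge hn

lemma bracket_eq_of_mem_cell {k : ℕ} {x : ℝ} (hk : k ≤ P.N) (hx : x ∈ P.cell k) :
    P.bracket x = P.pts k := by
  rw [bracket, P.idx_eq_of_mem_cell hk hx]

lemma Gamma_eq_of_mem_cell (l : ℝ → ℝ) {k : ℕ} {x : ℝ} (hk : k ≤ P.N) (hx : x ∈ P.cell k) :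
    P.Gamma l x = (P.pts (k + 1) - P.pts k) / l (P.pts k) := by
  rw [Gamma, P.idx_eq_of_mem_cell hk hx]

lemma mem_cell_idx {x : ℝ} (hx : x ∈ Ico 0 1) : x ∈ P.cell (P.idx x) := by
  refine ⟨Nat.findGreatest_spec (P := fun k => P.pts k ≤ x) (Nat.zero_le _)
    (by simpa [P.pts_zero] using hx.1), ?_⟩
  by_contra! h
  rcases (P.idx_le x).lt_or_eq with hlt | heq
  · exact Nat.findGreatest_is_greatest (Nat.lt_succ_self _) hlt h
  · rw [heq, P.pts_last] at h
    exact hx.2.not_ge h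

lemma biUnion_cell : ⋃ k ∈ Finset.range (P.N + 1), P.cell k = Ico 0 1 := by
  ext x
  simp only [mem_iUnion, Finset.mem_range, exists_prop]
  constructor
  · rintro ⟨k, hk, hx⟩
    exact ⟨(P.pts_mem_Icc hk.le).1.trans hx.1, hx.2.trans_le (P.pts_mem_Icc hk).2⟩
  · exact fun hx => ⟨P.idx x, Nat.lt_succ_of_le (P.idx_le x), P.mem_cell_idx hx⟩

lemma pairwiseDisjoint_cell : (Finset.range (P.N + 1) : Set ℕ).PairwiseDisjoint P.cell := by
  intro i hi j hj hij
  refine Set.disjoint_left.2 fun x hxi hxj => hij ?_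
  simp only [Finset.coe_range, mem_Iio] at hi hj
  rw [← P.idx_eq_of_mem_cell (Nat.lt_succ_iff.1 hi) hxi,
    P.idx_eq_of_mem_cell (Nat.lt_succ_iff.1 hj) hxj]

lemma setIntegral_Ioo_prod_bracket {β E : Type*} [MeasureSpace β] [SFinite (volume : Measure β)]
    [NormedAddCommGroup E] [NormedSpace ℝ E] {T : Set β} (hT : MeasurableSet T)
    (f : ℝ → ℝ × β → E) (hf : ∀ k ≤ P.N, IntegrableOn (f (P.pts k)) (P.cell k ×ˢ T)) :
    ∫ q in Ioo 0 1 ×ˢ T, f (P.bracket q.1) q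
      = ∑ k ∈ Finset.range (P.N + 1), ∫ q in P.cell k ×ˢ T, f (P.pts k) q := by
  have hmeas : ∀ k, MeasurableSet (P.cell k ×ˢ T) := fun k => measurableSet_Ico.prod hT
  have hbracket : ∀ k ≤ P.N, EqOn (fun q => f (P.bracket q.1) q) (f (P.pts k)) (P.cell k ×ˢ T) :=
    fun k hk q hq => by simp only [P.bracket_eq_of_mem_cell hk hq.1]
  have hae : (Ioo 0 1 ×ˢ T : Set (ℝ × β)) =ᵐ[volume] Ico 0 1 ×ˢ T :=
    Measure.set_prod_ae_eq Ioo_ae_eq_Ico ae_eq_rfl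
  rw [setIntegral_congr_set hae, ← P.biUnion_cell,
    iUnion₂_prod_const, integral_biUnion_finset _ (fun k _ => hmeas k)
      (fun i hi j hj hij => (P.pairwiseDisjoint_cell hi hj hij).set_prod_left T T)
      (fun k hk => (hf k (Nat.lt_succ_iff.1 (Finset.mem_range.1 hk))).congr_fun
        (hbracket k (Nat.lt_succ_iff.1 (Finset.mem_range.1 hk))).symm (hmeas k))]
  exact Finset.sum_congr rfl fun k hk =>
    setIntegral_congr_fun (hmeas k) (hbracket k (Nat.lt_succ_iff.1 (Finset.mem_range.1 hk)))

end ThinPartition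

lemma measurableSet_Ystar (l1 G1 : ℝ) : MeasurableSet (Ystar l1 G1) :=
  measurableSet_Ioo.prod measurableSet_Ioo

lemma isOpen_thinDomain {G : ℝ → ℝ → ℝ}
    (hG : ContinuousOn (fun z : ℝ × ℝ => G z.1 z.2) (Ioo 0 1 ×ˢ univ)) (ε : ℝ) :
    IsOpen (thinDomain G ε) := by
  have hcont : ContinuousOn (fun z : ℝ × ℝ => (z.2, ε * G z.1 (z.1 / ε))) (Ioo 0 1 ×ˢ univ) :=
    continuous_snd.continuousOn.prodMk (continuousOn_const.mul (hG.comp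
      (continuous_fst.prodMk (continuous_fst.div_const ε)).continuousOn
      fun z hz => ⟨hz.1, mem_univ _⟩))
  have hopen : IsOpen {p : ℝ × ℝ | 0 < p.1 ∧ p.1 < p.2} :=
    (isOpen_lt continuous_const continuous_fst).inter (isOpen_lt continuous_fst continuous_snd)
  convert hcont.isOpen_inter_preimage (isOpen_Ioo.prod isOpen_univ) hopen using 1
  ext z
  simp [thinDomain]

lemma thinDomain_subset_Ioo_prod_Ioo {G : ℝ → ℝ → ℝ} {G1 ε : ℝ} (hε : 0 ≤ ε)
    (hG : ∀ x ∈ Ioo (0 : ℝ) 1, ∀ y, G x y ≤ G1) :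
    thinDomain G ε ⊆ Ioo 0 1 ×ˢ Ioo 0 (ε * G1) :=
  fun z ⟨hx, hy⟩ => ⟨hx, hy.1, hy.2.trans_le (mul_le_mul_of_nonneg_left (hG z.1 hx _) hε)⟩

section Unfolding

variable (G : ℝ → ℝ → ℝ) (l : ℝ → ℝ) {ε : ℝ} (P : ThinPartition) (φ : ℝ × ℝ → ℝ)

lemma unfoldOp_eq_of_mem_cell {k : ℕ} (hk : k ≤ P.N) {q : ℝ × ℝ × ℝ} (hq : q.1 ∈ P.cell k) :
    unfoldOp G l ε P φ q = (Iio (l (P.pts k)) ×ˢ univ).indicator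
      (fun y => (thinDomain G ε).indicator φ
        (P.pts k + (P.pts (k + 1) - P.pts k) / l (P.pts k) * y.1, ε * y.2)) q.2 := by
  simp only [unfoldOp, P.bracket_eq_of_mem_cell hk hq, P.Gamma_eq_of_mem_cell l hk hq,
    indicator_apply, mem_prod, mem_Iio, mem_univ, and_true]

variable {l1 G1 : ℝ} {k : ℕ}

lemma integrableOn_cell_prod_Ystar_unfoldOp (hε : 0 < ε) (hk : k ≤ P.N)
    (hlk : 0 < l (P.pts k)) (hφ : Integrable ((thinDomain G ε).indicator φ)) :
    IntegrableOn (unfoldOp G l ε P φ) (P.cell k ×ˢ Ystar l1 G1) := by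
  have hΓ : 0 < (P.pts (k + 1) - P.pts k) / l (P.pts k) :=
    div_pos (sub_pos.2 (P.pts_lt k hk)) hlk
  refine IntegrableOn.congr_fun ?_ (fun q hq => (unfoldOp_eq_of_mem_cell G l P φ hk hq.1).symm)
    (measurableSet_Ico.prod (measurableSet_Ystar l1 G1))
  rw [IntegrableOn, Measure.volume_eq_prod, ← Measure.prod_restrict]
  exact (((integrable_comp_affine_prod hΓ hε hφ).indicator
    (measurableSet_Iio.prod MeasurableSet.univ)).restrict).comp_snd _

lemma setIntegral_cell_prod_Ystar_unfoldOp (hε : 0 < ε) (hk : k ≤ P.N)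
    (hlk : 0 < l (P.pts k)) (hlk1 : l (P.pts k) ≤ l1) :
    ∫ q in P.cell k ×ˢ Ystar l1 G1, unfoldOp G l ε P φ q
      = l (P.pts k) / ε * ∫ z in P.cell k ×ˢ Ioo 0 (ε * G1), (thinDomain G ε).indicator φ z := by
  set Γ := (P.pts (k + 1) - P.pts k) / l (P.pts k)
  have hlen : 0 < P.pts (k + 1) - P.pts k := sub_pos.2 (P.pts_lt k hk)
  have hΓ : 0 < Γ := div_pos hlen hlk
  have hend : P.pts k + Γ * l (P.pts k) = P.pts (k + 1) := by
    simp only [Γ, div_mul_cancel₀ _ hlk.ne', add_sub_cancel]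
  have hae : (Ioo (P.pts k) (P.pts (k + 1)) ×ˢ Ioo 0 (ε * G1) : Set (ℝ × ℝ))
      =ᵐ[volume] P.cell k ×ˢ Ioo 0 (ε * G1) :=
    Measure.set_prod_ae_eq Ioo_ae_eq_Ico ae_eq_rfl
  calc ∫ q in P.cell k ×ˢ Ystar l1 G1, unfoldOp G l ε P φ q
      = ∫ q in P.cell k ×ˢ Ystar l1 G1, (Iio (l (P.pts k)) ×ˢ univ).indicator
          (fun y => (thinDomain G ε).indicator φ (P.pts k + Γ * y.1, ε * y.2)) q.2 :=
        setIntegral_congr_fun (measurableSet_Ico.prod (measurableSet_Ystar l1 G1))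
          fun q hq => unfoldOp_eq_of_mem_cell G l P φ hk hq.1
    _ = (P.pts (k + 1) - P.pts k) * ∫ y in Ioo 0 (l (P.pts k)) ×ˢ Ioo 0 G1,
          (thinDomain G ε).indicator φ (P.pts k + Γ * y.1, ε * y.2) := by
        rw [Measure.volume_eq_prod, ← Measure.prod_restrict, integral_fun_snd,
          measureReal_restrict_apply_univ, ThinPartition.cell,
          Real.volume_real_Ico_of_le (P.pts_lt k hk).le, smul_eq_mul,
          setIntegral_indicator (measurableSet_Iio.prod .univ), Ystar, prod_inter_prod,
          Ioo_inter_Iio, min_eq_right hlk1, inter_univ]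
    _ = l (P.pts k) / ε * ∫ z in P.cell k ×ˢ Ioo 0 (ε * G1), (thinDomain G ε).indicator φ z := by
        rw [setIntegral_Ioo_prod_Ioo_comp_affine hΓ hε, hend, setIntegral_congr_set hae,
          smul_eq_mul, ← mul_assoc]
        congr 1
        simp only [Γ]
        field_simp

theorem setIntegral_bracket_mul_unfoldOp {G : ℝ → ℝ → ℝ} {l : ℝ → ℝ} {ε l1 G1 : ℝ}
    {P : ThinPartition} {φ : ℝ × ℝ → ℝ} (w : ℝ → ℝ) (hε : 0 < ε)
    (hl : ∀ k ≤ P.N, 0 < l (P.pts k) ∧ l (P.pts k) ≤ l1)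
    (hR : MeasurableSet (thinDomain G ε)) (hRsub : thinDomain G ε ⊆ Ioo 0 1 ×ˢ Ioo 0 (ε * G1))
    (hφ : IntegrableOn φ (thinDomain G ε)) :
    ∫ q in Ioo 0 1 ×ˢ Ystar l1 G1, w (P.bracket q.1) * unfoldOp G l ε P φ q
      = 1 / ε * ∫ z in thinDomain G ε, w (P.bracket z.1) * l (P.bracket z.1) * φ z := by
  set Φ := (thinDomain G ε).indicator φ
  have hΦ : Integrable Φ := hφ.integrable_indicator hR
  have hunfold := P.setIntegral_Ioo_prod_bracket (measurableSet_Ystar l1 G1)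
    (fun c q => w c * unfoldOp G l ε P φ q) fun k hk =>
      (integrableOn_cell_prod_Ystar_unfoldOp G l P φ hε hk (hl k hk).1 hΦ).const_mul _
  have hfold := P.setIntegral_Ioo_prod_bracket (measurableSet_Ioo (a := 0) (b := ε * G1))
    (fun c z => w c * l c * Φ z) fun k _ => hΦ.integrableOn.const_mul _
  beta_reduce at hunfold hfold
  rw [hunfold, ← inter_eq_self_of_subset_right hRsub, ← setIntegral_indicator hR]
  simp_rw [indicator_mul_right]
  rw [hfold, Finset.mul_sum]
  refine Finset.sum_congr rfl fun k hk => ?_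
  have hkN := Nat.lt_succ_iff.1 (Finset.mem_range.1 hk)
  rw [integral_const_mul, integral_const_mul,
    setIntegral_cell_prod_Ystar_unfoldOp G l P φ hε hkN (hl k hkN).1 (hl k hkN).2]
  ring

end Unfolding

theorem unfolding_criterion_for_integrals_general
    (l0 l1 G0 G1 : ℝ) (hl0 : 0 < l0)
    (l : ℝ → ℝ)
    (hlb : ∀ x ∈ Icc (0 : ℝ) 1, l0 ≤ l x ∧ l x < l1)
    (G : ℝ → ℝ → ℝ)
    (hGcont : ContinuousOn (fun z : ℝ × ℝ => G z.1 z.2) (Ioo 0 1 ×ˢ (univ : Set ℝ)))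
    (hGb : ∀ x ∈ Ioo (0 : ℝ) 1, ∀ y : ℝ, G0 ≤ G x y ∧ G x y ≤ G1)
    (ε : ℝ) (hε : 0 < ε) (P : ThinPartition)
    (φ : ℝ × ℝ → ℝ) (hφ : IntegrableOn φ (thinDomain G ε)) :
    (∫ q in Ioo (0 : ℝ) 1 ×ˢ Ystar l1 G1,
        (1 / l (P.bracket q.1)) * unfoldOp G l ε P φ q)
      = (1 / ε) * ∫ z in thinDomain G ε, φ z ∧
    (∫ q in Ioo (0 : ℝ) 1 ×ˢ Ystar l1 G1, unfoldOp G l ε P φ q)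
      = (1 / ε) * ∫ z in thinDomain G ε, l (P.bracket z.1) * φ z := by
  have hlpos : ∀ x ∈ Icc (0 : ℝ) 1, 0 < l x := fun x hx => hl0.trans_le (hlb x hx).1
  have hl : ∀ k ≤ P.N, 0 < l (P.pts k) ∧ l (P.pts k) ≤ l1 := fun k hk =>
    have hk' := P.pts_mem_Icc (Nat.le_succ_of_le hk)
    ⟨hlpos _ hk', (hlb _ hk').2.le⟩
  have hR := (isOpen_thinDomain hGcont ε).measurableSet
  have hRsub := thinDomain_subset_Ioo_prod_Ioo hε.le fun x hx y => (hGb x hx y).2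
  constructor
  · rw [setIntegral_bracket_mul_unfoldOp (fun c => 1 / l c) hε hl hR hRsub hφ]
    congr 1
    refine setIntegral_congr_fun hR fun z _ => ?_
    rw [one_div_mul_cancel (hlpos _ (P.bracket_mem_Icc z.1)).ne', one_mul]
  · simpa only [one_mul] using
      setIntegral_bracket_mul_unfoldOp (fun _ => 1) hε hl hR hRsub hφ

/-- Unfolding criterion for integrals (Prop. 3.3(iii)). -/
theorem unfolding_criterion_for_integrals
    (l0 l1 G0 G1 : ℝ) (hl0 : 0 < l0) (hl01 : l0 < l1) (hG0 : 0 < G0) (hG01 : G0 ≤ G1)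
    (l : ℝ → ℝ) (hlC1 : ContDiffOn ℝ 1 l (Ioo 0 1))
    (hlb : ∀ x ∈ Icc (0 : ℝ) 1, l0 ≤ l x ∧ l x < l1)
    (G : ℝ → ℝ → ℝ)
    (hGcont : ContinuousOn (fun z : ℝ × ℝ => G z.1 z.2) (Ioo 0 1 ×ˢ (univ : Set ℝ)))
    (hGb : ∀ x ∈ Ioo (0 : ℝ) 1, ∀ y : ℝ, G0 ≤ G x y ∧ G x y ≤ G1)
    (hGper : ∀ x ∈ Ioo (0 : ℝ) 1, ∀ y : ℝ, G x (y + l x) = G x y)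
    (ε : ℝ) (hε : 0 < ε) (P : ThinPartition)
    (φ : ℝ × ℝ → ℝ) (hφ : IntegrableOn φ (thinDomain G ε)) :
    (∫ q in Ioo (0 : ℝ) 1 ×ˢ Ystar l1 G1,
        (1 / l (P.bracket q.1)) * unfoldOp G l ε P φ q)
      = (1 / ε) * ∫ z in thinDomain G ε, φ z ∧
    (∫ q in Ioo (0 : ℝ) 1 ×ˢ Ystar l1 G1, unfoldOp G l ε P φ q)
      = (1 / ε) * ∫ z in thinDomain G ε, l (P.bracket z.1) * φ z :=
  unfolding_criterion_for_integrals_general l0 l1 G0 G1 hl0 l hlb G hGcont hGb ε hε P φ hφ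
end
end

section
/- (Step (b) in the proof of Prop. 4.3.) Let l : (0,1) → ℝ be continuously differentiable with l(t) ≥ l_0 > 0 for all t. Let x ∈ (0,1) satisfy x·l'(x) ≠ l(x), and let y₁ ∈ (0, l(x)). Let ε_n → 0⁺, let p_n be natural numbers, and let a_n, b_n ∈ (0,1) with a_n < b_n, a_n → x, b_n → x, a_n = ε_n p_n l(a_n), and b_n = ε_n (p_n + 1) l(b_n). Set Γ_n := (b_n − a_n)/l(a_n). Then for all sufficiently large n the point a_n + Γ_n y₁ lies in (0,1), and (1/ε_n)·( a_n − l(a_n + Γ_n y₁)·a_n/l(a_n) ) → −(x·l'(x)/l(x))·(1 − x·l'(x)/l(x))^{−1} y₁ as n → ∞. -/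
open MeasureTheory Set Filter Topology

noncomputable section

/-!
Put `q_n = ε_n p_n`, so that the cell equations read `a_n = q_n l(a_n)` and
`b_n = (q_n + ε_n) l(b_n)`; in particular `q_n → x / l(x)`. Subtracting them gives
`(b_n - a_n) (1 - q_n s_n) = ε_n l(b_n)`, where `s_n → l'(x)` is the slope of `l` over
`[a_n, b_n]`, hence `(b_n - a_n) / ε_n → l(x) / (1 - λ)` with `λ = x l'(x) / l(x) ≠ 1`.
The quantity in question equals `p_n (l(a_n) - l(a_n + Γ_n y₁))`, and strict differentiability
of `l` at `x` lets us replace it by `-l'(x) p_n Γ_n y₁`, where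
`p_n Γ_n = q_n ((b_n - a_n) / ε_n) / l(a_n) → x / (l(x) (1 - λ))`.
-/

open Asymptotics

section StrictDeriv

variable {𝕜 F α : Type*} [NontriviallyNormedField 𝕜] [NormedAddCommGroup F] [NormedSpace 𝕜 F]
  {l : 𝕜 → F} {D : F} {x : 𝕜} {f : Filter α} {u v : α → 𝕜}

theorem HasStrictDerivAt.tendsto_smul_sub (hl : HasStrictDerivAt l D x)
    (hu : Tendsto u f (𝓝 x)) (hv : Tendsto v f (𝓝 x)) {c : α → 𝕜} {L : 𝕜}
    (hc : Tendsto (fun n => c n * (u n - v n)) f (𝓝 L)) :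
    Tendsto (fun n => c n • (l (u n) - l (v n))) f (𝓝 (L • D)) := by
  have hrem : (fun n => l (u n) - l (v n) - (u n - v n) • D) =o[f] fun n => u n - v n :=
    (hasDerivAtFilter_iff_isLittleO.1 hl).comp_tendsto (hu.prodMk_nhds hv)
  have hrem' : Tendsto (fun n => c n • (l (u n) - l (v n) - (u n - v n) • D)) f (𝓝 0) :=
    (isLittleO_one_iff ℝ).1 <|
      ((isBigO_refl c f).smul_isLittleO hrem).trans_isBigO (hc.isBigO_one ℝ)
  simpa [smul_sub, smul_smul] using hrem'.add (hc.smul_const D)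

theorem HasStrictDerivAt.tendsto_slope (hl : HasStrictDerivAt l D x)
    (hu : Tendsto u f (𝓝 x)) (hv : Tendsto v f (𝓝 x)) (hne : ∀ᶠ n in f, u n ≠ v n) :
    Tendsto (fun n => slope l (u n) (v n)) f (𝓝 D) := by
  have hc : Tendsto (fun n => (v n - u n)⁻¹ * (v n - u n)) f (𝓝 1) :=
    tendsto_const_nhds.congr' <| hne.mono fun n h => (inv_mul_cancel₀ (sub_ne_zero.2 h.symm)).symm
  simpa [slope] using hl.tendsto_smul_sub hv hu hc

end StrictDeriv

section Cells

variable {α : Type*} {f : Filter α} {l : ℝ → ℝ} {D x : ℝ} {ε q a b : α → ℝ}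

theorem tendsto_of_eq_mul_comp (hl : ContinuousAt l x) (hlx : l x ≠ 0)
    (ha : Tendsto a f (𝓝 x)) (haeq : ∀ n, a n = q n * l (a n)) :
    Tendsto q f (𝓝 (x / l x)) :=
  (ha.div (hl.tendsto.comp ha) hlx).congr' <|
    ((hl.tendsto.comp ha).eventually_ne hlx).mono fun n h => div_eq_of_eq_mul h (haeq n)

theorem tendsto_add_sub_div_mul (hl : ContinuousAt l x) (hlx : l x ≠ 0)
    (ha : Tendsto a f (𝓝 x)) (hb : Tendsto b f (𝓝 x)) (y : ℝ) :
    Tendsto (fun n => a n + (b n - a n) / l (a n) * y) f (𝓝 x) := by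
  simpa using ha.add (((hb.sub ha).div (hl.tendsto.comp ha) hlx).mul_const y)

variable (hl : HasStrictDerivAt l D x) (hlx : l x ≠ 0) (hnd : x * D ≠ l x)
  (ha : Tendsto a f (𝓝 x)) (hb : Tendsto b f (𝓝 x)) (hab : ∀ᶠ n in f, a n ≠ b n)
  (hε : ∀ᶠ n in f, ε n ≠ 0)
  (haeq : ∀ n, a n = q n * l (a n)) (hbeq : ∀ n, b n = (q n + ε n) * l (b n))
include hl hlx hnd ha hb hab hε haeq hbeq

theorem tendsto_sub_div_of_cell_eq :
    Tendsto (fun n => (b n - a n) / ε n) f (𝓝 (l x / (1 - x * D / l x))) := by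
  have hq := tendsto_of_eq_mul_comp hl.hasDerivAt.continuousAt hlx ha haeq
  have hden : Tendsto (fun n => 1 - q n * slope l (a n) (b n)) f (𝓝 (1 - x * D / l x)) := by
    simpa [div_mul_eq_mul_div] using tendsto_const_nhds.sub (hq.mul (hl.tendsto_slope ha hb hab))
  have hden0 : 1 - x * D / l x ≠ 0 := by
    rw [sub_ne_zero, ne_comm, Ne, div_eq_one_iff_eq hlx]; exact hnd
  refine ((hl.hasDerivAt.continuousAt.tendsto.comp hb).div hden hden0).congr' ?_
  filter_upwards [hab, hε, hden.eventually_ne hden0] with n hne hεn hdn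
  show l (b n) / _ = _
  rw [div_eq_div_iff hdn hεn, slope_def_field]
  have hba : b n - a n ≠ 0 := sub_ne_zero.2 hne.symm
  field_simp
  linear_combination haeq n - hbeq n

theorem tendsto_bracket_shift (y : ℝ) :
    Tendsto (fun n => (1 / ε n) * (a n - l (a n + (b n - a n) / l (a n) * y) * a n / l (a n)))
      f (𝓝 (-(x * D / l x) * (1 - x * D / l x)⁻¹ * y)) := by
  have hla : Tendsto (fun n => l (a n)) f (𝓝 (l x)) := hl.hasDerivAt.continuousAt.tendsto.comp ha
  have hq := tendsto_of_eq_mul_comp hl.hasDerivAt.continuousAt hlx ha haeq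
  have hw := tendsto_sub_div_of_cell_eq hl hlx hnd ha hb hab hε haeq hbeq
  have hc : Tendsto (fun n => q n / ε n * (a n - (a n + (b n - a n) / l (a n) * y))) f
      (𝓝 (-(x / l x * (l x / (1 - x * D / l x) / l x) * y))) :=
    ((hq.mul (hw.div hla hlx)).mul_const y).neg.congr fun n => by simp only [Pi.div_apply]; ring
  convert (hl.tendsto_smul_sub ha (tendsto_add_sub_div_mul hl.hasDerivAt.continuousAt hlx ha hb y)
    hc).congr' ?_ using 2
  · rw [smul_eq_mul]
    field_simp
  · filter_upwards [hla.eventually_ne hlx] with n hn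
    rw [smul_eq_mul, mul_div_assoc, div_eq_of_eq_mul hn (haeq n)]
    linear_combination (-(1 / ε n)) * haeq n

end Cells

theorem bracket_shift_limit_general
    (l0 : ℝ) (hl0 : 0 < l0)
    (l : ℝ → ℝ) (hlC1 : ContDiffOn ℝ 1 l (Ioo 0 1))
    (hlb : ∀ t ∈ Ioo (0 : ℝ) 1, l0 ≤ l t)
    (x : ℝ) (hx : x ∈ Ioo (0 : ℝ) 1) (hnd : x * deriv l x ≠ l x)
    (ε : ℕ → ℝ) (hεpos : ∀ n, 0 < ε n)
    (p : ℕ → ℕ) (a b : ℕ → ℝ)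
    (hab : ∀ n, a n < b n)
    (hax : Tendsto a atTop (𝓝 x)) (hbx : Tendsto b atTop (𝓝 x))
    (haeq : ∀ n, a n = ε n * (p n : ℝ) * l (a n))
    (hbeq : ∀ n, b n = ε n * ((p n : ℝ) + 1) * l (b n))
    (y₁ : ℝ) :
    (∀ᶠ n in atTop, a n + (b n - a n) / l (a n) * y₁ ∈ Ioo (0 : ℝ) 1) ∧
    Tendsto
      (fun n => (1 / ε n) *
        (a n - l (a n + (b n - a n) / l (a n) * y₁) * a n / l (a n)))
      atTop
      (𝓝 (-(x * deriv l x / l x) * (1 - x * deriv l x / l x)⁻¹ * y₁)) := by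
  have hmem : Ioo 0 1 ∈ 𝓝 x := Ioo_mem_nhds hx.1 hx.2
  have hl : HasStrictDerivAt l (deriv l x) x :=
    (hlC1.contDiffAt hmem).hasStrictDerivAt one_ne_zero
  have hlx : l x ≠ 0 := (hl0.trans_le (hlb x hx)).ne'
  refine ⟨(tendsto_add_sub_div_mul hl.hasDerivAt.continuousAt hlx hax hbx y₁).eventually_mem hmem,
    tendsto_bracket_shift (q := fun n => ε n * p n) hl hlx hnd hax hbx
      (.of_forall fun n => (hab n).ne) (.of_forall fun n => (hεpos n).ne') haeq
      (fun n => (hbeq n).trans (by ring)) y₁⟩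

/-- Step (b) in the proof of Prop. 4.3. -/
theorem bracket_shift_limit
    (l0 : ℝ) (hl0 : 0 < l0)
    (l : ℝ → ℝ) (hlC1 : ContDiffOn ℝ 1 l (Ioo 0 1))
    (hlb : ∀ t ∈ Ioo (0 : ℝ) 1, l0 ≤ l t)
    (x : ℝ) (hx : x ∈ Ioo (0 : ℝ) 1) (hnd : x * deriv l x ≠ l x)
    (ε : ℕ → ℝ) (hεpos : ∀ n, 0 < ε n) (hε : Tendsto ε atTop (𝓝 0))
    (p : ℕ → ℕ) (a b : ℕ → ℝ)
    (ha : ∀ n, a n ∈ Ioo (0 : ℝ) 1) (hb : ∀ n, b n ∈ Ioo (0 : ℝ) 1)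
    (hab : ∀ n, a n < b n)
    (hax : Tendsto a atTop (𝓝 x)) (hbx : Tendsto b atTop (𝓝 x))
    (haeq : ∀ n, a n = ε n * (p n : ℝ) * l (a n))
    (hbeq : ∀ n, b n = ε n * ((p n : ℝ) + 1) * l (b n))
    (y₁ : ℝ) (hy₁ : y₁ ∈ Ioo (0 : ℝ) (l x)) :
    (∀ᶠ n in atTop, a n + (b n - a n) / l (a n) * y₁ ∈ Ioo (0 : ℝ) 1) ∧
    Tendsto
      (fun n => (1 / ε n) *
        (a n - l (a n + (b n - a n) / l (a n) * y₁) * a n / l (a n)))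
      atTop
      (𝓝 (-(x * deriv l x / l x) * (1 - x * deriv l x / l x)⁻¹ * y₁)) :=
  bracket_shift_limit_general l0 hl0 l hlC1 hlb x hx hnd ε hεpos p a b hab hax hbx haeq hbeq y₁
end
end

section
/- (Convergence of the unfolded microscopic variable, convergence (4.5) in the proof of Prop. 4.3.) Let l : (0,1) → ℝ be continuously differentiable with l(t) ≥ l_0 > 0 for all t. Let x ∈ (0,1) satisfy x·l'(x) ≠ l(x), and let y₁ ∈ (0, l(x)). Let ε_n → 0⁺, let p_n be natural numbers, and let a_n, b_n ∈ (0,1) with a_n < b_n, a_n → x, b_n → x, a_n = ε_n p_n l(a_n), and b_n = ε_n (p_n + 1) l(b_n). Set Γ_n := (b_n − a_n)/l(a_n). Then (1/ε_n)·( a_n − l(a_n + Γ_n y₁)·a_n/l(a_n) + Γ_n y₁ ) → y₁ as n → ∞. -/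
open MeasureTheory Set Filter Topology

noncomputable section

/-!
With `Γ = (b - a) / l a` and `u = a + Γ y₁`, the cell relations `a / l a = ε p` and
`b / l b = ε (p + 1)` give `1 - a / l a * slope l a b = ε l b / (b - a)`, so the quantity equals
`y₁ (l b / l a) (1 - a / l a * slope l a u) / (1 - a / l a * slope l a b)`. Strict
differentiability of `l` at `x` sends both slopes to `l' x`, and `x l' x ≠ l x` makes the common
limit of numerator and denominator nonzero.
-/

theorem HasStrictDerivAt.tendsto_slope_of_tendsto {𝕜 F : Type*} [NontriviallyNormedField 𝕜]
    [NormedAddCommGroup F] [NormedSpace 𝕜 F] {f : 𝕜 → F} {f' : F} {x : 𝕜}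
    (hf : HasStrictDerivAt f f' x) {α : Type*} {L : Filter α} {u v : α → 𝕜}
    (hu : Tendsto u L (𝓝 x)) (hv : Tendsto v L (𝓝 x)) (huv : ∀ᶠ n in L, u n ≠ v n) :
    Tendsto (fun n => slope f (u n) (v n)) L (𝓝 f') := by
  have hlo := (hasDerivAtFilter_iff_isLittleO.1 hf).comp_tendsto (hv.prodMk_nhds hu)
  rw [← tendsto_sub_nhds_zero_iff]
  refine hlo.tendsto_inv_smul_nhds_zero.congr' ?_
  filter_upwards [huv] with n hn
  simp only [Function.comp_apply, smul_sub, slope_def_module]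
  rw [inv_smul_smul₀ (sub_ne_zero.2 hn.symm)]

theorem one_sub_div_mul_slope_eq {k : Type*} [Field k] {f : k → k} {a b ε : k} (hab : a ≠ b)
    (ha : f a ≠ 0) (hb : f b ≠ 0) (hcell : b / f b - a / f a = ε) :
    1 - a / f a * slope f a b = ε * f b / (b - a) := by
  have hba : b - a ≠ 0 := sub_ne_zero.2 hab.symm
  rw [← hcell, slope_def_field]
  field_simp
  ring

theorem unfolded_microscopic_variable_eq {k : Type*} [Field k] {f : k → k} {a b ε y : k}
    (hε : ε ≠ 0) (hab : a ≠ b) (ha : f a ≠ 0) (hb : f b ≠ 0)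
    (hcell : b / f b - a / f a = ε) :
    1 / ε * (a - f (a + (b - a) / f a * y) * a / f a + (b - a) / f a * y) =
      y * (f b / f a) * ((1 - a / f a * slope f a (a + (b - a) / f a * y)) /
        (1 - a / f a * slope f a b)) := by
  have hba : b - a ≠ 0 := sub_ne_zero.2 hab.symm
  have hu := (sub_smul_slope_vadd f a (a + (b - a) / f a * y)).symm
  rw [add_sub_cancel_left, smul_eq_mul, vadd_eq_add] at hu
  rw [hu, one_sub_div_mul_slope_eq hab ha hb hcell]
  generalize slope f a (a + (b - a) / f a * y) = s
  field_simp
  ring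

theorem unfolded_microscopic_variable_limit_general
    (l : ℝ → ℝ) (hlC1 : ContDiffOn ℝ 1 l (Ioo 0 1))
    (x : ℝ) (hx : x ∈ Ioo (0 : ℝ) 1) (hnd : x * deriv l x ≠ l x)
    (ε : ℕ → ℝ) (hεpos : ∀ n, 0 < ε n)
    (p : ℕ → ℕ) (a b : ℕ → ℝ)
    (hab : ∀ n, a n < b n)
    (hax : Tendsto a atTop (𝓝 x)) (hbx : Tendsto b atTop (𝓝 x))
    (haeq : ∀ n, a n = ε n * (p n : ℝ) * l (a n))
    (hbeq : ∀ n, b n = ε n * ((p n : ℝ) + 1) * l (b n))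
    (y₁ : ℝ) (hy₁ : y₁ ∈ Ioo (0 : ℝ) (l x)) :
    Tendsto
      (fun n => (1 / ε n) *
        (a n - l (a n + (b n - a n) / l (a n) * y₁) * a n / l (a n)
          + (b n - a n) / l (a n) * y₁))
      atTop (𝓝 y₁) := by
  have hl : HasStrictDerivAt l (deriv l x) x :=
    (hlC1.contDiffAt (Ioo_mem_nhds hx.1 hx.2)).hasStrictDerivAt one_ne_zero
  have hlx : l x ≠ 0 := (hy₁.1.trans hy₁.2).ne'
  have hla : Tendsto (fun n => l (a n)) atTop (𝓝 (l x)) :=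
    hl.hasDerivAt.continuousAt.tendsto.comp hax
  have hlb : Tendsto (fun n => l (b n)) atTop (𝓝 (l x)) :=
    hl.hasDerivAt.continuousAt.tendsto.comp hbx
  have hu : Tendsto (fun n => a n + (b n - a n) / l (a n) * y₁) atTop (𝓝 x) := by
    simpa using hax.add (((hbx.sub hax).div hla hlx).mul_const y₁)
  have hD : 1 - x / l x * deriv l x ≠ 0 := by
    rwa [sub_ne_zero, ne_comm, div_mul_eq_mul_div, ne_eq, div_eq_one_iff_eq hlx]
  have hla0 := hla.eventually_ne hlx
  have hsb := hl.tendsto_slope_of_tendsto hax hbx (.of_forall fun n => (hab n).ne)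
  have hsu := hl.tendsto_slope_of_tendsto hax hu <| by
    filter_upwards [hla0] with n hn
    exact (add_ne_left.2 <|
      mul_ne_zero (div_ne_zero (sub_ne_zero.2 (hab n).ne') hn) hy₁.1.ne').symm
  have hDlim {s : ℕ → ℝ} (hs : Tendsto s atTop (𝓝 (deriv l x))) :
      Tendsto (fun n => 1 - a n / l (a n) * s n) atTop (𝓝 (1 - x / l x * deriv l x)) :=
    tendsto_const_nhds.sub ((hax.div hla hlx).mul hs)
  have hlim := ((hlb.div hla hlx).const_mul y₁).mul ((hDlim hsu).div (hDlim hsb) hD)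
  rw [div_self hlx, div_self hD, mul_one, mul_one] at hlim
  refine hlim.congr' ?_
  filter_upwards [hla0, hlb.eventually_ne hlx] with n ha0 hb0
  refine (unfolded_microscopic_variable_eq (hεpos n).ne' (hab n).ne ha0 hb0 ?_).symm
  rw [(div_eq_iff hb0).2 (hbeq n), (div_eq_iff ha0).2 (haeq n)]
  ring

/-- Convergence of the unfolded microscopic variable (convergence (4.5) in Prop. 4.3). -/
theorem unfolded_microscopic_variable_limit
    (l0 : ℝ) (hl0 : 0 < l0)
    (l : ℝ → ℝ) (hlC1 : ContDiffOn ℝ 1 l (Ioo 0 1))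
    (hlb : ∀ t ∈ Ioo (0 : ℝ) 1, l0 ≤ l t)
    (x : ℝ) (hx : x ∈ Ioo (0 : ℝ) 1) (hnd : x * deriv l x ≠ l x)
    (ε : ℕ → ℝ) (hεpos : ∀ n, 0 < ε n) (hε : Tendsto ε atTop (𝓝 0))
    (p : ℕ → ℕ) (a b : ℕ → ℝ)
    (ha : ∀ n, a n ∈ Ioo (0 : ℝ) 1) (hb : ∀ n, b n ∈ Ioo (0 : ℝ) 1)
    (hab : ∀ n, a n < b n)
    (hax : Tendsto a atTop (𝓝 x)) (hbx : Tendsto b atTop (𝓝 x))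
    (haeq : ∀ n, a n = ε n * (p n : ℝ) * l (a n))
    (hbeq : ∀ n, b n = ε n * ((p n : ℝ) + 1) * l (b n))
    (y₁ : ℝ) (hy₁ : y₁ ∈ Ioo (0 : ℝ) (l x)) :
    Tendsto
      (fun n => (1 / ε n) *
        (a n - l (a n + (b n - a n) / l (a n) * y₁) * a n / l (a n)
          + (b n - a n) / l (a n) * y₁))
      atTop (𝓝 y₁) :=
  unfolded_microscopic_variable_limit_general l hlC1 x hx hnd ε hεpos p a b hab hax hbx haeq hbeq y₁
    hy₁
end
end

section
/- (Pointwise convergence of the unfolded boundary profile, Prop. 4.3.) Let l : (0,1) → ℝ be continuously differentiable with l(t) ≥ l_0 > 0 for all t, and let G : (0,1) × ℝ → ℝ be continuous and such that for each t ∈ (0,1) the function G(t,·) is l(t)-periodic. Let x ∈ (0,1) satisfy x·l'(x) ≠ l(x), and let y₁ ∈ (0, l(x)). Let ε_n → 0⁺, let p_n be natural numbers, and let a_n, b_n ∈ (0,1) with a_n < b_n, a_n → x, b_n → x, a_n = ε_n p_n l(a_n), and b_n = ε_n (p_n + 1) l(b_n). Set Γ_n := (b_n − a_n)/l(a_n).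 Then G( a_n + Γ_n y₁, (1/ε_n)(a_n + Γ_n y₁) ) → G(x, y₁) as n → ∞. -/
open MeasureTheory Set Filter Topology

noncomputable section

/-! Put `Γₙ = (bₙ - aₙ) / l(aₙ)` and `Xₙ = aₙ + Γₙ y₁`. Subtracting the two cell equations gives
`bₙ l(aₙ) - aₙ l(bₙ) = εₙ l(aₙ) l(bₙ)`; writing `l(bₙ) - l(aₙ)` as a slope times `bₙ - aₙ` this
yields `Γₙ / εₙ → l(x) / (l(x) - x l'(x))`, finite by nondegeneracy, so `Γₙ → 0` and `Xₙ → x`.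
Since `G(Xₙ, ·)` is `l(Xₙ)`-periodic, only the offset `Xₙ / εₙ - pₙ l(Xₙ)` matters; expanding
`l(Xₙ) = l(aₙ) + τₙ Γₙ y₁` with a slope `τₙ → l'(x)` and using `aₙ = εₙ pₙ l(aₙ)`, the offset is
`(Γₙ / εₙ) y₁ (1 - aₙ τₙ / l(aₙ)) → y₁`. Continuity of `G` at `(x, y₁)` concludes. -/

theorem HasStrictDerivAt.tendsto_slope_s8 {𝕜 F ι : Type*} [NontriviallyNormedField 𝕜]
    [NormedAddCommGroup F] [NormedSpace 𝕜 F] {f : 𝕜 → F} {f' : F} {x : 𝕜} {L : Filter ι}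
    {u v : ι → 𝕜} (hf : HasStrictDerivAt f f' x) (hu : Tendsto u L (𝓝 x))
    (hv : Tendsto v L (𝓝 x)) (huv : ∀ᶠ i in L, u i ≠ v i) :
    Tendsto (fun i => slope f (u i) (v i)) L (𝓝 f') := by
  have h := ((hasDerivAtFilter_iff_isLittleO.1 hf).comp_tendsto
    (hv.prodMk_nhds hu)).tendsto_inv_smul_nhds_zero.add_const f'
  rw [zero_add] at h
  refine h.congr' ?_
  filter_upwards [huv] with i hi
  simp [slope_def_module, smul_sub, inv_smul_smul₀ (sub_ne_zero.2 hi.symm)]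

theorem tendsto_of_periodic_of_tendsto_sub_int_mul {ι : Type*} {L : Filter ι}
    {G : ℝ → ℝ → ℝ} {l : ℝ → ℝ} {s : Set ℝ} {x y : ℝ}
    (hG : ContinuousAt (fun z : ℝ × ℝ => G z.1 z.2) (x, y))
    (hper : ∀ t ∈ s, Function.Periodic (G t) (l t)) {X Y : ι → ℝ} {k : ι → ℤ}
    (hX : Tendsto X L (𝓝 x)) (hXs : ∀ᶠ i in L, X i ∈ s)
    (hY : Tendsto (fun i => Y i - k i * l (X i)) L (𝓝 y)) :
    Tendsto (fun i => G (X i) (Y i)) L (𝓝 (G x y)) := by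
  refine (hG.tendsto.comp (hX.prodMk_nhds hY)).congr' ?_
  filter_upwards [hXs] with i hi
  exact (hper _ hi).sub_int_mul_eq (k i)

theorem tendsto_zero_of_tendsto_div {ι : Type*} {L : Filter ι} {f g : ι → ℝ} {q : ℝ}
    (hfg : Tendsto (fun i => f i / g i) L (𝓝 q)) (hg : Tendsto g L (𝓝 0))
    (hg0 : ∀ᶠ i in L, g i ≠ 0) : Tendsto f L (𝓝 0) := by
  rw [← mul_zero q]
  refine (hfg.mul hg).congr' ?_
  filter_upwards [hg0] with i hi
  exact div_mul_cancel₀ _ hi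

section UnfoldedCell

variable {ι : Type*} {L : Filter ι} {l : ℝ → ℝ} {c x : ℝ} {ε a b : ι → ℝ} {p : ι → ℕ}

theorem tendsto_cellScale_div
    (hl : HasStrictDerivAt l c x) (hlx : l x ≠ 0) (hnd : x * c ≠ l x)
    (ha : Tendsto a L (𝓝 x)) (hb : Tendsto b L (𝓝 x)) (hab : ∀ᶠ i in L, a i ≠ b i)
    (hε : ∀ᶠ i in L, ε i ≠ 0)
    (haeq : ∀ i, a i = ε i * p i * l (a i)) (hbeq : ∀ i, b i = ε i * (p i + 1) * l (b i)) :
    Tendsto (fun i => (b i - a i) / l (a i) / ε i) L (𝓝 (l x / (l x - x * c))) := by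
  have hlcont := (HasStrictDerivAt.hasDerivAt hl).continuousAt.tendsto
  have hla := hlcont.comp ha
  have hD0 : l x - x * c ≠ 0 := sub_ne_zero.2 hnd.symm
  have hD : Tendsto (fun i => l (a i) - a i * slope l (a i) (b i)) L (𝓝 (l x - x * c)) :=
    hla.sub (ha.mul (HasStrictDerivAt.tendsto_slope_s8 hl ha hb hab))
  refine ((hlcont.comp hb).div hD hD0).congr' ?_
  filter_upwards [hD.eventually_ne hD0, hε, hab, hla.eventually_ne hlx]
    with i hDi hεi habi hlai
  have hσ : slope l (a i) (b i) * (b i - a i) = l (b i) - l (a i) := by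
    rw [slope_def_field]; field_simp [sub_ne_zero.2 habi.symm]
  simp only [Pi.div_apply, Function.comp_apply] at hlai ⊢
  rw [div_div, div_eq_div_iff hDi (mul_ne_zero hlai hεi)]
  linear_combination a i * hσ - l (a i) * hbeq i + l (b i) * haeq i

theorem tendsto_div_sub_nat_mul_apply
    (hl : HasStrictDerivAt l c x) (hlx : l x ≠ 0) (ha : Tendsto a L (𝓝 x))
    (hε : ∀ᶠ i in L, ε i ≠ 0) (haeq : ∀ i, a i = ε i * p i * l (a i))
    {γ : ι → ℝ} {q : ℝ} (hγ : Tendsto (fun i => γ i / ε i) L (𝓝 q)) (hq : q ≠ 0)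
    {y : ℝ} (hy : y ≠ 0) (hX : Tendsto (fun i => a i + γ i * y) L (𝓝 x)) :
    Tendsto (fun i => (a i + γ i * y) / ε i - p i * l (a i + γ i * y)) L
      (𝓝 (q * y * (1 - x * c / l x))) := by
  have hla := (HasStrictDerivAt.hasDerivAt hl).continuousAt.tendsto.comp ha
  have hγ0 : ∀ᶠ i in L, γ i ≠ 0 := by
    filter_upwards [hγ.eventually_ne hq] with i hi hγi
    simp [hγi] at hi
  have hXa : ∀ᶠ i in L, a i ≠ a i + γ i * y := by
    filter_upwards [hγ0] with i hi
    simpa using mul_ne_zero hi hy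
  have hτ := HasStrictDerivAt.tendsto_slope_s8 hl ha hX hXa
  refine ((hγ.mul_const y).mul (tendsto_const_nhds.sub ((ha.mul hτ).div hla hlx))).congr' ?_
  filter_upwards [hε, hla.eventually_ne hlx, hXa] with i hεi hlai hXai
  have hτi : slope l (a i) (a i + γ i * y) * (γ i * y) = l (a i + γ i * y) - l (a i) := by
    rw [slope_def_field, add_sub_cancel_left]
    exact div_mul_cancel₀ _ (by simpa [eq_comm] using hXai)
  simp only [Pi.div_apply, Function.comp_apply] at hlai ⊢
  field_simp
  linear_combination -a i * hτi - l (a i + γ i * y) * haeq i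

end UnfoldedCell

theorem unfolded_boundary_profile_limit_general
    (l : ℝ → ℝ) (hlC1 : ContDiffOn ℝ 1 l (Ioo 0 1))
    (x : ℝ) (hx : x ∈ Ioo (0 : ℝ) 1) (hnd : x * deriv l x ≠ l x)
    (ε : ℕ → ℝ) (hεpos : ∀ n, 0 < ε n) (hε : Tendsto ε atTop (𝓝 0))
    (p : ℕ → ℕ) (a b : ℕ → ℝ)
    (hab : ∀ n, a n < b n)
    (hax : Tendsto a atTop (𝓝 x)) (hbx : Tendsto b atTop (𝓝 x))
    (haeq : ∀ n, a n = ε n * (p n : ℝ) * l (a n))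
    (hbeq : ∀ n, b n = ε n * ((p n : ℝ) + 1) * l (b n))
    (G : ℝ → ℝ → ℝ)
    (hGcont : ContinuousOn (fun z : ℝ × ℝ => G z.1 z.2) (Ioo 0 1 ×ˢ (univ : Set ℝ)))
    (hGper : ∀ t ∈ Ioo (0 : ℝ) 1, ∀ y : ℝ, G t (y + l t) = G t y)
    (y₁ : ℝ) (hy₁ : y₁ ∈ Ioo (0 : ℝ) (l x)) :
    Tendsto
      (fun n => G (a n + (b n - a n) / l (a n) * y₁)
          ((1 / ε n) * (a n + (b n - a n) / l (a n) * y₁)))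
      atTop (𝓝 (G x y₁)) := by
  have hl : HasStrictDerivAt l (deriv l x) x :=
    (hlC1.contDiffAt (isOpen_Ioo.mem_nhds hx)).hasStrictDerivAt one_ne_zero
  have hlx : l x ≠ 0 := (hy₁.1.trans hy₁.2).ne'
  have hD : l x - x * deriv l x ≠ 0 := sub_ne_zero.2 hnd.symm
  have hε0 : ∀ᶠ n in atTop, ε n ≠ 0 := .of_forall fun n => (hεpos n).ne'
  have hΓε := tendsto_cellScale_div hl hlx hnd hax hbx (.of_forall fun n => (hab n).ne) hε0
    haeq hbeq
  have hX : Tendsto (fun n => a n + (b n - a n) / l (a n) * y₁) atTop (𝓝 x) := by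
    simpa using hax.add ((tendsto_zero_of_tendsto_div hΓε hε hε0).mul_const y₁)
  have hS :=
    tendsto_div_sub_nat_mul_apply hl hlx hax hε0 haeq hΓε (div_ne_zero hlx hD) hy₁.1.ne' hX
  rw [show l x / (l x - x * deriv l x) * y₁ * (1 - x * deriv l x / l x) = y₁ by
    field_simp] at hS
  refine tendsto_of_periodic_of_tendsto_sub_int_mul (k := fun n => p n)
    (hGcont.continuousAt ((isOpen_Ioo.prod isOpen_univ).mem_nhds ⟨hx, mem_univ y₁⟩))
    hGper hX (hX.eventually_mem (isOpen_Ioo.mem_nhds hx)) ?_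
  simpa only [one_div_mul_eq_div, Int.cast_natCast] using hS

/-- Pointwise convergence of the unfolded boundary profile (Prop. 4.3). -/
theorem unfolded_boundary_profile_limit
    (l0 : ℝ) (hl0 : 0 < l0)
    (l : ℝ → ℝ) (hlC1 : ContDiffOn ℝ 1 l (Ioo 0 1))
    (hlb : ∀ t ∈ Ioo (0 : ℝ) 1, l0 ≤ l t)
    (x : ℝ) (hx : x ∈ Ioo (0 : ℝ) 1) (hnd : x * deriv l x ≠ l x)
    (ε : ℕ → ℝ) (hεpos : ∀ n, 0 < ε n) (hε : Tendsto ε atTop (𝓝 0))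
    (p : ℕ → ℕ) (a b : ℕ → ℝ)
    (ha : ∀ n, a n ∈ Ioo (0 : ℝ) 1) (hb : ∀ n, b n ∈ Ioo (0 : ℝ) 1)
    (hab : ∀ n, a n < b n)
    (hax : Tendsto a atTop (𝓝 x)) (hbx : Tendsto b atTop (𝓝 x))
    (haeq : ∀ n, a n = ε n * (p n : ℝ) * l (a n))
    (hbeq : ∀ n, b n = ε n * ((p n : ℝ) + 1) * l (b n))
    (G : ℝ → ℝ → ℝ)
    (hGcont : ContinuousOn (fun z : ℝ × ℝ => G z.1 z.2) (Ioo 0 1 ×ˢ (univ : Set ℝ)))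
    (hGper : ∀ t ∈ Ioo (0 : ℝ) 1, ∀ y : ℝ, G t (y + l t) = G t y)
    (y₁ : ℝ) (hy₁ : y₁ ∈ Ioo (0 : ℝ) (l x)) :
    Tendsto
      (fun n => G (a n + (b n - a n) / l (a n) * y₁)
          ((1 / ε n) * (a n + (b n - a n) / l (a n) * y₁)))
      atTop (𝓝 (G x y₁)) :=
  unfolded_boundary_profile_limit_general l hlC1 x hx hnd ε hεpos hε p a b hab hax hbx haeq hbeq G
    hGcont hGper y₁ hy₁
end
end
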